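/- Let 1 < r < √2 and define f(ℓ) = 2r / ( (2 − ℓ²/2) · √(1 − (1 − r²/(2 − ℓ²/2))²) · arccos(1 − r²/(2 − ℓ²/2)) ) for ℓ ∈ [0, r). Then f is monotonically non-decreasing on [0, r): for all 0 ≤ ℓ₁ ≤ ℓ₂ < r, f(ℓ₁) ≤ f(ℓ₂). -/
import Mathlib


open Real

/-- The likelihood ratio `f = dμ_B/dμ_I` on the boundary part
`∂^θ M⁺_{4,r}` of the confined moduli region, as a function of `ℓ`. -/
noncomputable def likelihoodRatio (r ℓ : ℝ) : ℝ :=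
  2 * r / ((2 - ℓ ^ 2 / 2) *
    Real.sqrt (1 - (1 - r ^ 2 / (2 - ℓ ^ 2 / 2)) ^ 2) *
    Real.arccos (1 - r ^ 2 / (2 - ℓ ^ 2 / 2)))

/-- Sine concavity: `x * sin s ≤ s * sin x` for `0 ≤ x ≤ s ≤ π`. -/
lemma sinc_ineq (x s : ℝ) (hx : 0 ≤ x) (hxs : x ≤ s) (hs : s ≤ π) :
    x * Real.sin s ≤ s * Real.sin x := by
  rcases eq_or_lt_of_le (hx.trans hxs) with h | hs0
  · have hx0 : x = 0 := le_antisymm (hxs.trans h.symm.le) hx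
    simp [hx0, ← h]
  · have key := strictConcaveOn_sin_Icc.concaveOn.2
      (Set.mem_Icc.2 ⟨le_refl (0:ℝ), Real.pi_pos.le⟩)
      (Set.mem_Icc.2 ⟨hs0.le, hs⟩)
      (show (0:ℝ) ≤ 1 - x / s by
        have := div_le_one_of_le₀ hxs hs0.le; linarith)
      (show (0:ℝ) ≤ x / s from div_nonneg hx hs0.le)
      (show 1 - x / s + x / s = 1 by ring)
    simp only [smul_eq_mul, mul_zero, Real.sin_zero, zero_add] at key
    rw [div_mul_cancel₀ _ hs0.ne'] at key
    have h2 := mul_le_mul_of_nonneg_right key hs0.le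
    rw [div_mul_eq_mul_div, div_mul_cancel₀ _ hs0.ne'] at h2
    linarith [h2]

lemma key_cot (a b : ℝ) (ha : 0 < a) (hab : a ≤ b) (hb : b < π / 2) :
    b * Real.cos b / Real.sin b ≤ a * Real.cos a / Real.sin a := by
  have hsa : 0 < Real.sin a := Real.sin_pos_of_pos_of_lt_pi ha (by linarith [Real.pi_pos])
  have hsb : 0 < Real.sin b := Real.sin_pos_of_pos_of_lt_pi (ha.trans_le hab)
    (by linarith [Real.pi_pos])
  rw [div_le_div_iff₀ hsb hsa]
  have h := sinc_ineq (b - a) (a + b) (by linarith) (by linarith) (by linarith)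
  rw [Real.sin_add, Real.sin_sub] at h
  nlinarith [h]

lemma sq_eq_of_nonneg {a b : ℝ} (ha : 0 ≤ a) (hb : 0 ≤ b) (h : a ^ 2 = b ^ 2) : a = b := by
  rw [← Real.sqrt_sq ha, h, Real.sqrt_sq hb]

lemma repr_lem (r ℓ : ℝ) (h1 : 1 < r) (h2 : r ^ 2 < 2) (hl0 : 0 ≤ ℓ) (hlr : ℓ < r) :
    0 < Real.arccos (1 - r ^ 2 / (2 - ℓ ^ 2 / 2)) ∧
    Real.arccos (1 - r ^ 2 / (2 - ℓ ^ 2 / 2)) < π ∧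
    likelihoodRatio r ℓ = 2 * r / (2 * r ^ 2 *
      (Real.arccos (1 - r ^ 2 / (2 - ℓ ^ 2 / 2)) / 2 *
        Real.cos (Real.arccos (1 - r ^ 2 / (2 - ℓ ^ 2 / 2)) / 2) /
        Real.sin (Real.arccos (1 - r ^ 2 / (2 - ℓ ^ 2 / 2)) / 2))) := by
  have hl2 : ℓ ^ 2 < r ^ 2 := by nlinarith
  have hr0 : (0:ℝ) < r := by linarith
  set D : ℝ := 2 - ℓ ^ 2 / 2 with hDdef
  have hD1 : (1:ℝ) < D := by rw [hDdef]; nlinarith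
  have hD0 : (0:ℝ) < D := by linarith
  set c : ℝ := 1 - r ^ 2 / D with hcdef
  have hrD : r ^ 2 / D < 2 := (div_lt_iff₀ hD0).2 (by rw [hDdef]; nlinarith)
  have hrD0 : 0 < r ^ 2 / D := div_pos (by nlinarith) hD0
  have hc1 : c < 1 := by rw [hcdef]; linarith
  have hcm1 : -1 < c := by rw [hcdef]; linarith
  set θ : ℝ := Real.arccos c with hθdef
  have hθ0 : 0 < θ := Real.arccos_pos.2 hc1
  have hθπ' : θ < π := lt_of_le_of_ne (Real.arccos_le_pi c)
    (fun h => by have := Real.arccos_eq_pi.1 h; linarith)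
  have hcos : Real.cos θ = c := Real.cos_arccos hcm1.le hc1.le
  have hsinφ : Real.sin (θ / 2) = Real.sqrt ((1 - c) / 2) := by
    rw [Real.sin_half_eq_sqrt (by linarith) (by linarith [Real.pi_pos]), hcos]
  have hcosφ : Real.cos (θ / 2) = Real.sqrt ((1 + c) / 2) := by
    rw [Real.cos_half (by linarith [Real.pi_pos]) hθπ'.le, hcos]
  have hsinφ0 : 0 < Real.sin (θ / 2) :=
    Real.sin_pos_of_pos_of_lt_pi (by linarith) (by linarith [Real.pi_pos])
  have hc2 : 0 ≤ 1 - c ^ 2 := by nlinarith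
  have key' : D * Real.sqrt (1 - c ^ 2) * Real.sin (θ / 2) = r ^ 2 * Real.cos (θ / 2) := by
    apply sq_eq_of_nonneg
    · exact mul_nonneg (mul_nonneg hD0.le (Real.sqrt_nonneg _)) hsinφ0.le
    · exact mul_nonneg (by positivity) (hcosφ ▸ Real.sqrt_nonneg _)
    · rw [mul_pow, mul_pow, mul_pow, hsinφ, hcosφ, Real.sq_sqrt hc2,
        Real.sq_sqrt (by linarith : (0:ℝ) ≤ (1 - c) / 2),
        Real.sq_sqrt (by linarith : (0:ℝ) ≤ (1 + c) / 2), hcdef]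
      field_simp
      ring
  refine ⟨hθ0, hθπ', ?_⟩
  show 2 * r / (D * Real.sqrt (1 - c ^ 2) * θ) =
    2 * r / (2 * r ^ 2 * (θ / 2 * Real.cos (θ / 2) / Real.sin (θ / 2)))
  congr 1
  have h2 : 2 * r ^ 2 * (θ / 2 * Real.cos (θ / 2) / Real.sin (θ / 2)) =
      r ^ 2 * θ * Real.cos (θ / 2) / Real.sin (θ / 2) := by ring
  rw [h2, eq_div_iff hsinφ0.ne']
  linear_combination θ * key'

/-- For `1 < r < √2`, the likelihood ratio `dμ_B/dμ_I` is monotonically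
non-decreasing in `ℓ` on `[0, r)` (the monotone likelihood ratio property). -/
theorem likelihoodRatio_monotoneOn (r : ℝ) (h1 : 1 < r) (h2 : r < Real.sqrt 2) :
    MonotoneOn (likelihoodRatio r) (Set.Ico 0 r) := by
  have hr2 : r ^ 2 < 2 := by
    have h := pow_lt_pow_left₀ h2 (by linarith) (n := 2) (by norm_num)
    rwa [Real.sq_sqrt (by norm_num : (0:ℝ) ≤ 2)] at h
  rintro ℓ₁ ⟨hl10, hl1r⟩ ℓ₂ ⟨hl20, hl2r⟩ h12
  obtain ⟨ha0, haπ, hrepr1⟩ := repr_lem r ℓ₁ h1 hr2 hl10 hl1r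
  obtain ⟨hb0, hbπ, hrepr2⟩ := repr_lem r ℓ₂ h1 hr2 hl20 hl2r
  set c₁ : ℝ := 1 - r ^ 2 / (2 - ℓ₁ ^ 2 / 2) with hc1def
  set c₂ : ℝ := 1 - r ^ 2 / (2 - ℓ₂ ^ 2 / 2) with hc2def
  have hD2 : (0:ℝ) < 2 - ℓ₂ ^ 2 / 2 := by nlinarith
  have hc21 : c₂ ≤ c₁ := by
    rw [hc1def, hc2def]
    have : r ^ 2 / (2 - ℓ₁ ^ 2 / 2) ≤ r ^ 2 / (2 - ℓ₂ ^ 2 / 2) := by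
      apply div_le_div_of_nonneg_left (by nlinarith) hD2 (by nlinarith)
    linarith
  have hc2m1 : -1 < c₂ := by
    rw [hc2def]
    have : r ^ 2 / (2 - ℓ₂ ^ 2 / 2) < 2 := (div_lt_iff₀ hD2).2 (by nlinarith)
    linarith
  have hc11 : c₁ ≤ 1 := by
    rw [hc1def]
    have : 0 ≤ r ^ 2 / (2 - ℓ₁ ^ 2 / 2) := div_nonneg (by positivity) (by nlinarith)
    linarith
  have hθ12 : Real.arccos c₁ ≤ Real.arccos c₂ :=
    Real.strictAntiOn_arccos.antitoneOn ⟨hc2m1.le, hc21.trans hc11⟩ ⟨hc2m1.le.trans hc21, hc11⟩ hc21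
  rw [hrepr1, hrepr2]
  have hq : Real.arccos c₂ / 2 * Real.cos (Real.arccos c₂ / 2) / Real.sin (Real.arccos c₂ / 2) ≤
      Real.arccos c₁ / 2 * Real.cos (Real.arccos c₁ / 2) / Real.sin (Real.arccos c₁ / 2) :=
    key_cot _ _ (by linarith) (by linarith) (by linarith)
  have hq2 : 0 < Real.arccos c₂ / 2 * Real.cos (Real.arccos c₂ / 2) /
      Real.sin (Real.arccos c₂ / 2) := by
    apply div_pos
    · exact mul_pos (by linarith)
        (Real.cos_pos_of_mem_Ioo ⟨by linarith [Real.pi_pos], by linarith⟩)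
    · exact Real.sin_pos_of_pos_of_lt_pi (by linarith) (by linarith [Real.pi_pos])
  exact div_le_div_of_nonneg_left (by linarith)
    (mul_pos (by positivity) hq2) (mul_le_mul_of_nonneg_left hq (by positivity))
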